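/- arXiv:1909.11372 — 2 statements merged into one kernel-verified Lean document; each statement's English description precedes it below -/
import Mathlib

section
/- Let A = T(a) + E + e v^T, where a is a Wiener-class sequence, E is a semi-infinite matrix with the decay property, and v ∈ ℓ¹. Then ‖A‖_∞ ≥ ‖a‖_W + ‖v‖_1. -/
/-!
Row `i` of `T(a) + e vᵀ` carries a copy of `a` shifted `i` places to the right on top of the fixed
row `v`. A finite part of `a` carrying almost all of `‖a‖_W` and an initial segment of `v` carrying
almost all of `‖v‖₁` are therefore supported on disjoint sets of columns once `i` is large, so these
row sums are eventually at least `‖a‖_W + ‖v‖₁ - ε`. The decay of `E` costs a further `ε` in late rows.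
-/

open Filter Topology

/-- Every row of `A` is absolutely summable. -/
def RowsSummable (A : ℕ → ℕ → ℝ) : Prop := ∀ i, Summable fun j => |A i j|

/-- The infinity norm of a semi-infinite matrix: the supremum of the row sums. -/
noncomputable def normInf (A : ℕ → ℕ → ℝ) : ℝ := ⨆ i, ∑' j, |A i j|

/-- `A` is bounded: all row sums are finite and their supremum is finite. -/
def MatBounded (A : ℕ → ℕ → ℝ) : Prop :=
  RowsSummable A ∧ BddAbove (Set.range fun i => ∑' j, |A i j|)

/-- `A` has the decay property: all row sums are finite and tend to zero. -/
def HasDecay (A : ℕ → ℕ → ℝ) : Prop :=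
  RowsSummable A ∧ Tendsto (fun i => ∑' j, |A i j|) atTop (𝓝 0)

/-- The semi-infinite Toeplitz matrix associated with a two-sided sequence:
`T(a)_{ij} = a_{j−i}`. -/
noncomputable def Toep (a : ℤ → ℝ) : ℕ → ℕ → ℝ := fun i j => a ((j : ℤ) - (i : ℤ))

/-- Convolution of two-sided sequences. -/
noncomputable def zconv (a b : ℤ → ℝ) : ℤ → ℝ := fun n => ∑' k : ℤ, a k * b (n - k)

section AbsSums

variable {ι : Type*}

lemma summable_abs_add {x y : ι → ℝ} (hx : Summable fun j => |x j|)
    (hy : Summable fun j => |y j|) : Summable fun j => |x j + y j| :=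
  (hx.add hy).of_nonneg_of_le (fun _ => abs_nonneg _) fun _ => abs_add_le _ _

lemma tsum_abs_add_le {x y : ι → ℝ} (hx : Summable fun j => |x j|)
    (hy : Summable fun j => |y j|) : ∑' j, |x j + y j| ≤ ∑' j, |x j| + ∑' j, |y j| := by
  rw [← (hx.tsum_add hy)]
  exact (summable_abs_add hx hy).tsum_le_tsum (fun j => abs_add_le _ _) (hx.add hy)

lemma tsum_abs_sub_tsum_abs_le {x y : ι → ℝ} (hx : Summable fun j => |x j|)
    (hy : Summable fun j => |y j|) : ∑' j, |x j| - ∑' j, |y j| ≤ ∑' j, |x j + y j| := by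
  have h := tsum_abs_add_le (summable_abs_add hx hy) (hy.congr fun j => (abs_neg (y j)).symm)
  simp only [add_neg_cancel_right, abs_neg] at h
  linarith

lemma sum_abs_sub_add_sum_abs_sub_le_sum_union [DecidableEq ι] (x y : ι → ℝ) {P Q : Finset ι}
    (hPQ : Disjoint P Q) :
    (∑ j ∈ P, |x j| - ∑ j ∈ P, |y j|) + (∑ j ∈ Q, |y j| - ∑ j ∈ Q, |x j|) ≤
      ∑ j ∈ P ∪ Q, |x j + y j| := by
  rw [Finset.sum_union hPQ, ← Finset.sum_sub_distrib, ← Finset.sum_sub_distrib]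
  gcongr with j _ j _
  · exact abs_sub_abs_le_abs_add _ _
  · simpa [add_comm] using abs_sub_abs_le_abs_add (y j) (x j)

end AbsSums

section Matrices

lemma MatBounded.add {A B : ℕ → ℕ → ℝ} (hA : MatBounded A) (hB : MatBounded B) :
    MatBounded (A + B) := by
  obtain ⟨hArows, CA, hCA⟩ := hA
  obtain ⟨hBrows, CB, hCB⟩ := hB
  refine ⟨fun i => summable_abs_add (hArows i) (hBrows i), CA + CB, ?_⟩
  rintro _ ⟨i, rfl⟩
  exact (tsum_abs_add_le (hArows i) (hBrows i)).trans
    (add_le_add (hCA ⟨i, rfl⟩) (hCB ⟨i, rfl⟩))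

lemma HasDecay.matBounded {E : ℕ → ℕ → ℝ} (hE : HasDecay E) : MatBounded E :=
  ⟨hE.1, hE.2.bddAbove_range⟩

lemma matBounded_rankOne {v : ℕ → ℝ} (hv : Summable fun j => |v j|) :
    MatBounded fun _ j => v j :=
  ⟨fun _ => hv, ⟨∑' j, |v j|, by rintro _ ⟨_, rfl⟩; exact le_rfl⟩⟩

lemma tsum_abs_row_le_normInf {A : ℕ → ℕ → ℝ} (hA : MatBounded A) (i : ℕ) :
    ∑' j, |A i j| ≤ normInf A :=
  le_ciSup hA.2 i

lemma eventually_lt_tsum_abs_add_of_hasDecay {B E : ℕ → ℕ → ℝ} {L : ℝ}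
    (hB : RowsSummable B) (hBL : ∀ c < L, ∀ᶠ i in atTop, c < ∑' j, |B i j|)
    (hE : HasDecay E) {c : ℝ} (hc : c < L) :
    ∀ᶠ i in atTop, c < ∑' j, |B i j + E i j| := by
  obtain ⟨c', hcc', hc'⟩ := exists_between hc
  filter_upwards [hBL c' hc', hE.2.eventually (gt_mem_nhds (sub_pos.2 hcc'))]
    with i hBi hEi
  linarith [tsum_abs_sub_tsum_abs_le (hB i) (hE.1 i)]

end Matrices

section Toeplitz

variable {a : ℤ → ℝ}

lemma summable_abs_toep_row (ha : Summable fun n => |a n|) (i : ℕ) :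
    Summable fun j => |Toep a i j| :=
  ha.comp_injective fun j k h => by simpa using h

lemma matBounded_toep (ha : Summable fun n => |a n|) : MatBounded (Toep a) := by
  refine ⟨summable_abs_toep_row ha, ∑' n, |a n|, ?_⟩
  rintro _ ⟨i, rfl⟩
  exact (summable_abs_toep_row ha i).tsum_le_tsum_of_inj (fun j : ℕ => (j : ℤ) - i)
    (fun j k h => by simpa using h) (fun _ _ => abs_nonneg _) (fun _ => le_rfl) ha

lemma tendsto_sum_range_abs_toep (ha : Summable fun n => |a n|) (N : ℕ) :
    Tendsto (fun i => ∑ j ∈ Finset.range N, |Toep a i j|) atTop (𝓝 0) := by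
  have hcol : ∀ j : ℕ, Tendsto (fun i => |Toep a i j|) atTop (𝓝 0) := fun j => by
    have hinj : Function.Injective fun i : ℕ => (j : ℤ) - i := fun i k h => by simpa using h
    exact ha.tendsto_cofinite_zero.comp (Nat.cofinite_eq_atTop ▸ hinj.tendsto_cofinite)
  simpa using tendsto_finsetSum (Finset.range N) fun j _ => hcol j

variable {v : ℕ → ℝ}

lemma sum_abs_sub_le_tsum_abs_toep_add_rankOne (ha : Summable fun n => |a n|)
    (hv : Summable fun j => |v j|) {s : Finset ℤ} {N i : ℕ} (hs : ∀ k ∈ s, (N : ℤ) ≤ k + i) :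
    ∑ k ∈ s, |a k| + ∑ j ∈ Finset.range N, |v j| - (∑' j, |v j| - ∑ j ∈ Finset.range N, |v j|)
      - ∑ j ∈ Finset.range N, |Toep a i j| ≤ ∑' j, |Toep a i j + v j| := by
  have hinj : Function.Injective fun j : ℕ => (j : ℤ) - i := fun j k h => by simpa using h
  set P := s.preimage (fun j : ℕ => (j : ℤ) - i) hinj.injOn
  have hPQ : Disjoint P (Finset.range N) := by
    refine Finset.disjoint_left.2 fun j hj hjN => ?_
    have := hs _ (Finset.mem_preimage.1 hj)
    simp only [Finset.mem_range] at hjN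
    omega
  have hPa : ∑ j ∈ P, |Toep a i j| = ∑ k ∈ s, |a k| :=
    Finset.sum_preimage _ s hinj.injOn (fun k => |a k|) fun k hk hkr =>
      absurd ⟨(k + i).toNat, by have := hs k hk; dsimp only; omega⟩ hkr
  have hPv : ∑ j ∈ P, |v j| + ∑ j ∈ Finset.range N, |v j| ≤ ∑' j, |v j| := by
    rw [← Finset.sum_union hPQ]
    exact hv.sum_le_tsum _ fun _ _ => abs_nonneg _
  have hrow : ∑ j ∈ P ∪ Finset.range N, |Toep a i j + v j| ≤ ∑' j, |Toep a i j + v j| :=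
    (summable_abs_add (summable_abs_toep_row ha i) hv).sum_le_tsum _ fun _ _ => abs_nonneg _
  linarith [sum_abs_sub_add_sum_abs_sub_le_sum_union (Toep a i) v hPQ]

lemma eventually_lt_tsum_abs_toep_add_rankOne (ha : Summable fun n => |a n|)
    (hv : Summable fun j => |v j|) {c : ℝ} (hc : c < ∑' n, |a n| + ∑' j, |v j|) :
    ∀ᶠ i in atTop, c < ∑' j, |Toep a i j + v j| := by
  obtain ⟨δ, hδ, hcδ⟩ : ∃ δ > 0, c = ∑' n, |a n| + ∑' j, |v j| - 4 * δ :=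
    ⟨(∑' n, |a n| + ∑' j, |v j| - c) / 4, by linarith, by ring⟩
  obtain ⟨s, hs⟩ := (ha.hasSum.eventually (lt_mem_nhds (sub_lt_self _ hδ))).exists
  obtain ⟨N, hN⟩ :=
    (hv.hasSum.tendsto_sum_nat.eventually (lt_mem_nhds (sub_lt_self _ hδ))).exists
  beta_reduce at hs
  obtain ⟨M, hM⟩ := s.bddBelow
  filter_upwards [(tendsto_sum_range_abs_toep ha N).eventually (gt_mem_nhds hδ),
    eventually_ge_atTop (N - M).toNat] with i hi hiM
  have hsi : ∀ k ∈ s, (N : ℤ) ≤ k + i := fun k hk => by have := hM hk; omega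
  linarith [sum_abs_sub_le_tsum_abs_toep_add_rankOne ha hv hsi]

end Toeplitz

theorem stmt11 (a : ℤ → ℝ) (ha : Summable fun n => |a n|)
    (E : ℕ → ℕ → ℝ) (hE : HasDecay E)
    (v : ℕ → ℝ) (hv : Summable fun j => |v j|) :
    (∑' n : ℤ, |a n|) + (∑' j, |v j|) ≤
      normInf (fun i j => Toep a i j + E i j + v j) := by
  have hA : MatBounded (fun i j => Toep a i j + E i j + v j) :=
    ((matBounded_toep ha).add hE.matBounded).add (matBounded_rankOne hv)
  have hB : RowsSummable fun i j => Toep a i j + v j :=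
    ((matBounded_toep ha).add (matBounded_rankOne hv)).1
  refine le_of_forall_lt fun c hc => ?_
  obtain ⟨i, hi⟩ := (eventually_lt_tsum_abs_add_of_hasDecay hB
    (fun _ => eventually_lt_tsum_abs_toep_add_rankOne ha hv) hE hc).exists
  refine hi.trans_le (le_of_eq_of_le ?_ (tsum_abs_row_le_normInf hA i))
  simp only [add_right_comm]
end

section
/- Assume a_{1,−1} + a_{1,0} + a_{1,1} > 0. Let ζ ∈ ℂ with |ζ| = 1 be such that a_1(ζ) ≠ 0, and let λ₁, λ₂ ∈ ℂ be the two roots of the quadratic a_1(ζ)λ² + (a_0(ζ)−1)λ + a_{−1}(ζ) = 0 (i.e. λ₁ + λ₂ = (1−a_0(ζ))/a_1(ζ) and λ₁λ₂ = a_{−1}(ζ)/a_1(ζ)). If |λ₁| = |λ₂|, then there exists k ∈ {−1,0,1} such that λ₁ = λ₂ = ζ^k. -/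
open Filter Topology

/- Convention: the transition probabilities a_{i,j} (i,j ∈ {−1,0,1}) are encoded
as `v : Fin 3 → Fin 3 → ℝ`, where the index `0, 1, 2` corresponds to `−1, 0, 1`. -/

/-- `symb v i z = a_i(z) = a_{i,−1} z⁻¹ + a_{i,0} + a_{i,1} z`. -/
noncomputable def symb (v : Fin 3 → Fin 3 → ℝ) (i : Fin 3) (z : ℂ) : ℂ :=
  (v i 0 : ℂ) * z⁻¹ + (v i 1 : ℂ) + (v i 2 : ℂ) * z

/-- `symbOne v i = a_i(1) = a_{i,−1} + a_{i,0} + a_{i,1}` (as a real number). -/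
def symbOne (v : Fin 3 → Fin 3 → ℝ) (i : Fin 3) : ℝ := v i 0 + v i 1 + v i 2

/-- The fixed-point iteration θ_0 = 0, θ_{k+1} = a_{−1}(ζ) + a_0(ζ) θ_k + a_1(ζ) θ_k². -/
noncomputable def quadIter (am1 a0 a1 : ℂ) : ℕ → ℂ
  | 0 => 0
  | k + 1 => am1 + a0 * quadIter am1 a0 a1 k + a1 * (quadIter am1 a0 a1 k) ^ 2

/-!
Put `A = a_1(ζ)`, `B = a_0(ζ)`, `C = a_{−1}(ζ)`, `a_i = a_i(1)` and `r = |λ₁| = |λ₂|`. On the unit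
circle `|a_i(ζ)| ≤ a_i`, so Vieta's formulas give `a + c = 1 − b ≤ |1 − B| ≤ 2|A| r ≤ 2 a r` and
`(a + c) r ≤ 2|A| r² = 2|C| ≤ 2c`; multiplying, `(a − c)² r ≤ 0`, whence `a = c` and `r = 1`.
Then `Re(Aλ₁) + Re(Aλ₂) = 1 − Re B ≥ 2a` while `|Aλᵢ| ≤ a`, so `Re(Aλᵢ) = a`. Since `Aλᵢ` is the
combination `∑ a_{1,j} ζʲ λᵢ` of unit numbers with weights summing to `a`, every `ζʲ λᵢ` with
`a_{1,j} > 0` equals `1`.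
-/

lemma Complex.eq_one_of_norm_le_one_of_re_eq_one {u : ℂ} (hu : ‖u‖ ≤ 1) (hre : u.re = 1) :
    u = 1 := by
  have hsq : u.re ^ 2 + u.im ^ 2 ≤ 1 := by
    rw [← Complex.normSq_add_mul_I u.re u.im, Complex.re_add_im, ← Complex.sq_norm]
    nlinarith [norm_nonneg u]
  exact Complex.ext hre (by simp only [Complex.one_im]; nlinarith [sq_nonneg u.im])

lemma eq_one_of_re_sum_mul_eq_sum {ι : Type*} {s : Finset ι} {w : ι → ℝ} {u : ι → ℂ}
    (hw : ∀ j ∈ s, 0 ≤ w j) (hu : ∀ j ∈ s, ‖u j‖ ≤ 1)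
    (h : (∑ j ∈ s, (w j : ℂ) * u j).re = ∑ j ∈ s, w j) {j : ι} (hj : j ∈ s) (hwj : 0 < w j) :
    u j = 1 := by
  have hre_le : ∀ j ∈ s, (u j).re ≤ 1 := fun j hj => (Complex.re_le_norm _).trans (hu j hj)
  have hgap : ∑ j ∈ s, w j * (1 - (u j).re) = 0 := by
    simp only [Complex.re_sum, Complex.re_ofReal_mul] at h
    simp only [mul_sub, mul_one, Finset.sum_sub_distrib, h, sub_self]
  have hgap_j := (Finset.sum_eq_zero_iff_of_nonneg fun j hj =>
    mul_nonneg (hw j hj) (sub_nonneg.2 (hre_le j hj))).1 hgap j hj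
  exact Complex.eq_one_of_norm_le_one_of_re_eq_one (hu j hj)
    (sub_eq_zero.1 ((mul_eq_zero.1 hgap_j).resolve_left hwj.ne')).symm

lemma symb_eq_sum (v : Fin 3 → Fin 3 → ℝ) (i : Fin 3) (z : ℂ) :
    symb v i z = ∑ j : Fin 3, (v i j : ℂ) * z ^ ((j : ℕ) - 1 : ℤ) := by
  simp [symb, Fin.sum_univ_three]

lemma symbOne_eq_sum (v : Fin 3 → Fin 3 → ℝ) (i : Fin 3) : symbOne v i = ∑ j, v i j := by
  simp [symbOne, Fin.sum_univ_three]

lemma norm_symb_le {v : Fin 3 → Fin 3 → ℝ} {i : Fin 3} (hv : ∀ j, 0 ≤ v i j) {z : ℂ}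
    (hz : ‖z‖ = 1) : ‖symb v i z‖ ≤ symbOne v i := by
  rw [symb_eq_sum, symbOne_eq_sum]
  refine (norm_sum_le _ _).trans (le_of_eq (Finset.sum_congr rfl fun j _ => ?_))
  rw [norm_mul, norm_zpow, hz, one_zpow, mul_one, Complex.norm_real, Real.norm_of_nonneg (hv j)]

section Quadratic

variable {A B C l₁ l₂ : ℂ} {a b c : ℝ}

lemma eq_and_norm_root_eq_one (ha : 0 < a) (hc : 0 ≤ c) (habc : a + b + c = 1)
    (hA : ‖A‖ ≤ a) (hB : ‖B‖ ≤ b) (hC : ‖C‖ ≤ c)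
    (hsum : A * (l₁ + l₂) = 1 - B) (hprod : A * (l₁ * l₂) = C) (hl : ‖l₁‖ = ‖l₂‖) :
    a = c ∧ ‖l₁‖ = 1 := by
  set r := ‖l₁‖
  have hr : 0 ≤ r := norm_nonneg _
  have hBsub : a + c ≤ ‖1 - B‖ := by
    have := norm_sub_norm_le (1 : ℂ) B
    rw [norm_one] at this
    linarith
  have hsum_le : ‖1 - B‖ ≤ 2 * ‖A‖ * r := by
    rw [← hsum, norm_mul]
    nlinarith [norm_add_le l₁ l₂, norm_nonneg A]
  have hprod_eq : ‖A‖ * r ^ 2 = ‖C‖ := by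
    rw [← hprod, norm_mul, norm_mul, ← hl]; ring
  have k₁ : a + c ≤ 2 * a * r := by nlinarith
  have k₂ : (a + c) * r ≤ 2 * c := by nlinarith
  have hr0 : 0 < r := by nlinarith
  have hsq : (a - c) ^ 2 * r ≤ 0 := by nlinarith [mul_le_mul k₁ k₂ (by positivity) (by positivity)]
  obtain rfl : a = c := by nlinarith [sq_nonneg (a - c)]
  exact ⟨rfl, by nlinarith⟩

lemma re_mul_root_eq (ha : 0 < a) (hc : 0 ≤ c) (habc : a + b + c = 1)
    (hA : ‖A‖ ≤ a) (hB : ‖B‖ ≤ b) (hC : ‖C‖ ≤ c)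
    (hsum : A * (l₁ + l₂) = 1 - B) (hprod : A * (l₁ * l₂) = C) (hl : ‖l₁‖ = ‖l₂‖) :
    (A * l₁).re = a ∧ (A * l₂).re = a := by
  obtain ⟨rfl, hl₁⟩ := eq_and_norm_root_eq_one ha hc habc hA hB hC hsum hprod hl
  have hle : ∀ l : ℂ, ‖l‖ = 1 → (A * l).re ≤ a := fun l hl' =>
    (Complex.re_le_norm _).trans (by rw [norm_mul, hl', mul_one]; exact hA)
  have hre : (A * l₁).re + (A * l₂).re = 1 - B.re := by
    rw [← Complex.add_re, ← mul_add, hsum, Complex.sub_re, Complex.one_re]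
  have hBre := (Complex.re_le_norm B).trans hB
  have h₁ := hle l₁ hl₁
  have h₂ := hle l₂ (hl ▸ hl₁)
  constructor <;> linarith

end Quadratic

theorem stmt16 (v : Fin 3 → Fin 3 → ℝ) (hnn : ∀ i j, 0 ≤ v i j)
    (hsum : ∑ i, ∑ j, v i j = 1)
    (ha1 : 0 < symbOne v 2)
    (ζ : ℂ) (hζ : ‖ζ‖ = 1) (hA1 : symb v 2 ζ ≠ 0)
    (l1 l2 : ℂ)
    (hroots_sum : l1 + l2 = (1 - symb v 1 ζ) / symb v 2 ζ)
    (hroots_prod : l1 * l2 = symb v 0 ζ / symb v 2 ζ)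
    (habs : ‖l1‖ = ‖l2‖) :
    ∃ k : ℤ, k ∈ ({-1, 0, 1} : Set ℤ) ∧ l1 = ζ ^ k ∧ l2 = ζ ^ k := by
  have habc : symbOne v 2 + symbOne v 1 + symbOne v 0 = 1 := by
    simpa [Fin.sum_univ_three, symbOne_eq_sum, add_comm, add_left_comm] using hsum
  have hc : 0 ≤ symbOne v 0 := by rw [symbOne_eq_sum]; exact Finset.sum_nonneg fun j _ => hnn 0 j
  have hbound := fun i => norm_symb_le (hnn i) hζ
  have hsum' : symb v 2 ζ * (l1 + l2) = 1 - symb v 1 ζ := by rw [hroots_sum, mul_div_cancel₀ _ hA1]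
  have hprod' : symb v 2 ζ * (l1 * l2) = symb v 0 ζ := by rw [hroots_prod, mul_div_cancel₀ _ hA1]
  obtain ⟨-, hl1⟩ := eq_and_norm_root_eq_one ha1 hc habc (hbound 2) (hbound 1) (hbound 0)
    hsum' hprod' habs
  obtain ⟨hre1, hre2⟩ := re_mul_root_eq ha1 hc habc (hbound 2) (hbound 1) (hbound 0)
    hsum' hprod' habs
  obtain ⟨j, -, hj⟩ := Finset.exists_lt_of_sum_lt (s := Finset.univ) (f := fun _ => (0 : ℝ))
    (g := v 2) (by simpa [symbOne_eq_sum] using ha1)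
  have hroot : ∀ l : ℂ, ‖l‖ = 1 → (symb v 2 ζ * l).re = symbOne v 2 →
      l = ζ ^ (1 - (j : ℕ) : ℤ) := by
    intro l hl hre
    have hu := eq_one_of_re_sum_mul_eq_sum (u := fun j : Fin 3 => ζ ^ ((j : ℕ) - 1 : ℤ) * l)
      (fun j _ => hnn 2 j) (fun j _ => by simp [norm_zpow, hζ, hl])
      (by simpa [symb_eq_sum, Finset.sum_mul, mul_assoc, symbOne_eq_sum] using hre)
      (Finset.mem_univ j) hj
    rw [eq_inv_of_mul_eq_one_right hu, ← zpow_neg, neg_sub]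
  refine ⟨1 - (j : ℕ), ?_, hroot l1 hl1 hre1, hroot l2 (habs ▸ hl1) hre2⟩
  fin_cases j <;> simp
end
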